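/- Fix A ∈ ℂ^{n×n} and an integer k with 1 ≤ k ≤ (n+1)/2. Let z_k ∈ ℂ be a minimizer of z ↦ σ_k(zI − A) over ℂ (such a minimizer exists), and set s_k = σ_k(z_k I − A). Then for every z ∈ ℂ, σ_k(zI − A) ≥ max( s_k, |z − z_k|/2 ). -/

import Mathlib

open MeasureTheory Matrix Filter
open scoped Pointwise

noncomputable section

/-- The `k`-th largest singular value (1-indexed) of a square complex matrix: the
square root of the `k`-th largest eigenvalue of `Mᴴ * M`; junk value `0` out of range. -/
def sval {m : ℕ} (M : Matrix (Fin m) (Fin m) ℂ) (k : ℕ) : ℝ :=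
  if h : 1 ≤ k ∧ k ≤ m then
    Real.sqrt
      (((Matrix.isHermitian_conjTranspose_mul_self M).eigenvalues ∘
          Tuple.sort (Matrix.isHermitian_conjTranspose_mul_self M).eigenvalues)
        ⟨m - k, by omega⟩)
  else 0

end

/-! Courant–Fischer: `σ_k(M) ≤ c` as soon as `‖M x‖ ≤ c ‖x‖` on some subspace of dimension
`n - k + 1`, and the span of the right singular vectors belonging to `σ_k, …, σ_n` is such
a subspace with `c = σ_k(M)`. Intersecting these subspaces for `B` and `C` gives Weyl's
inequality `σ_{i+j-1}(B + C) ≤ σ_i(B) + σ_j(C)`. For `B = zI - A`, `C = A - wI` and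
`i = j = k` (possible as `2k - 1 ≤ n`) it reads `|z - w| ≤ σ_k(zI - A) + σ_k(wI - A)`,
which at a minimizer `w = z_k` is at most `2 σ_k(zI - A)`. With `j = 1` it shows that
`z ↦ σ_k(zI - A)` is `1`-Lipschitz and grows like `|z|`, so a minimizer exists. -/

open scoped InnerProductSpace

theorem OrthonormalBasis.re_inner_self_apply_eq_sum {𝕜 E ι : Type*} [RCLike 𝕜]
    [NormedAddCommGroup E] [InnerProductSpace 𝕜 E] [Fintype ι] (b : OrthonormalBasis ι 𝕜 E)
    {T : E →ₗ[𝕜] E} (hT : T.IsSymmetric) {μ : ι → ℝ} (hb : ∀ i, T (b i) = (μ i : 𝕜) • b i)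
    (x : E) : RCLike.re ⟪x, T x⟫_𝕜 = ∑ i, μ i * ‖⟪b i, x⟫_𝕜‖ ^ 2 := by
  have hcoord (i : ι) : ⟪b i, T x⟫_𝕜 = μ i * ⟪b i, x⟫_𝕜 := by
    rw [← hT, hb, inner_smul_left, RCLike.conj_ofReal]
  rw [← b.sum_inner_mul_inner x (T x), map_sum]
  refine Finset.sum_congr rfl fun i _ => ?_
  rw [hcoord, mul_left_comm, RCLike.re_ofReal_mul, ← inner_conj_symm x, RCLike.conj_mul]
  norm_cast

namespace Matrix.IsHermitian

variable {𝕜 : Type*} [RCLike 𝕜] {n : ℕ} {H : Matrix (Fin n) (Fin n) 𝕜}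

noncomputable def sortedEigenvalues (hH : H.IsHermitian) : Fin n → ℝ :=
  hH.eigenvalues ∘ Tuple.sort hH.eigenvalues

noncomputable def sortedEigenbasis (hH : H.IsHermitian) :
    OrthonormalBasis (Fin n) 𝕜 (EuclideanSpace 𝕜 (Fin n)) :=
  hH.eigenvectorBasis.reindex (Tuple.sort hH.eigenvalues).symm

theorem monotone_sortedEigenvalues (hH : H.IsHermitian) : Monotone hH.sortedEigenvalues :=
  Tuple.monotone_sort _

theorem toEuclideanLin_sortedEigenbasis (hH : H.IsHermitian) (i : Fin n) :
    toEuclideanLin H (hH.sortedEigenbasis i) =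
      (hH.sortedEigenvalues i : 𝕜) • hH.sortedEigenbasis i := by
  have := hH.mulVec_eigenvectorBasis (Tuple.sort hH.eigenvalues i)
  rw [RCLike.real_smul_eq_coe_smul (K := 𝕜)] at this
  ext1
  simp only [sortedEigenbasis, sortedEigenvalues, OrthonormalBasis.reindex_apply, Equiv.symm_symm,
    Matrix.toLpLin_apply, Function.comp_apply]
  exact congrFun this _

end Matrix.IsHermitian

theorem LinearIndependent.finrank_span_image {K V ι : Type*} [DivisionRing K] [AddCommGroup V]
    [Module K V] {v : ι → V} (hv : LinearIndependent K v) (S : Finset ι) :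
    Module.finrank K (Submodule.span K (v '' S)) = S.card := by
  rw [Set.image_eq_range]
  exact (finrank_span_eq_card (hv.comp _ Subtype.val_injective)).trans (by simp)

section RightSingularBasis

variable {n : ℕ} (M : Matrix (Fin n) (Fin n) ℂ)

noncomputable def rightSingularBasis : OrthonormalBasis (Fin n) ℂ (EuclideanSpace ℂ (Fin n)) :=
  (isHermitian_conjTranspose_mul_self M).sortedEigenbasis

/-- Eigenvalues of `Mᴴ * M` in increasing order: `σ_k(M) ^ 2` is the entry at `n - k`. -/
noncomputable def sqSingularValues : Fin n → ℝ :=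
  (isHermitian_conjTranspose_mul_self M).sortedEigenvalues

theorem norm_toEuclideanLin_sq (x : EuclideanSpace ℂ (Fin n)) :
    ‖toEuclideanLin M x‖ ^ 2 =
      ∑ j, sqSingularValues M j * ‖⟪rightSingularBasis M j, x⟫_ℂ‖ ^ 2 := by
  have hMM : toEuclideanLin (Mᴴ * M) =
      LinearMap.adjoint (toEuclideanLin M) ∘ₗ toEuclideanLin M := by
    rw [← toEuclideanLin_conjTranspose_eq_adjoint]
    ext1 y
    simp
  rw [← (rightSingularBasis M).re_inner_self_apply_eq_sum (μ := sqSingularValues M)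
      (isSymmetric_toEuclideanLin_iff.mpr (isHermitian_conjTranspose_mul_self M))
      (isHermitian_conjTranspose_mul_self M).toEuclideanLin_sortedEigenbasis,
    hMM, LinearMap.comp_apply, LinearMap.adjoint_inner_right, ← @norm_sq_eq_re_inner ℂ]

theorem inner_rightSingularBasis_eq_zero {S : Set (Fin n)} {x : EuclideanSpace ℂ (Fin n)}
    (hx : x ∈ Submodule.span ℂ (rightSingularBasis M '' S)) {j : Fin n} (hj : j ∉ S) :
    ⟪rightSingularBasis M j, x⟫_ℂ = 0 := by
  rw [← OrthonormalBasis.coe_toBasis] at hx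
  have := mt (fun h => (rightSingularBasis M).toBasis.mem_span_image.mp hx h) hj
  simpa [OrthonormalBasis.repr_apply_apply] using this

end RightSingularBasis

section CourantFischer

variable {n k : ℕ} (M : Matrix (Fin n) (Fin n) ℂ)

theorem sval_nonneg : 0 ≤ sval M k := by
  unfold sval
  split_ifs
  exacts [Real.sqrt_nonneg _, le_rfl]

theorem sq_sval (hk : 1 ≤ k) (hkn : k ≤ n) :
    sval M k ^ 2 = sqSingularValues M ⟨n - k, by omega⟩ := by
  rw [sval, dif_pos ⟨hk, hkn⟩]
  exact Real.sq_sqrt (eigenvalues_conjTranspose_mul_self_nonneg M _)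

theorem norm_toEuclideanLin_sq_le {S : Set (Fin n)} {c : ℝ}
    (hS : ∀ j ∈ S, sqSingularValues M j ≤ c) {x : EuclideanSpace ℂ (Fin n)}
    (hx : x ∈ Submodule.span ℂ (rightSingularBasis M '' S)) :
    ‖toEuclideanLin M x‖ ^ 2 ≤ c * ‖x‖ ^ 2 := by
  rw [norm_toEuclideanLin_sq, ← (rightSingularBasis M).sum_sq_norm_inner_right, Finset.mul_sum]
  refine Finset.sum_le_sum fun j _ => ?_
  by_cases hj : j ∈ S
  · exact mul_le_mul_of_nonneg_right (hS j hj) (by positivity)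
  · simp [inner_rightSingularBasis_eq_zero M hx hj]

theorem le_norm_toEuclideanLin_sq {S : Set (Fin n)} {c : ℝ}
    (hS : ∀ j ∈ S, c ≤ sqSingularValues M j) {x : EuclideanSpace ℂ (Fin n)}
    (hx : x ∈ Submodule.span ℂ (rightSingularBasis M '' S)) :
    c * ‖x‖ ^ 2 ≤ ‖toEuclideanLin M x‖ ^ 2 := by
  rw [norm_toEuclideanLin_sq, ← (rightSingularBasis M).sum_sq_norm_inner_right, Finset.mul_sum]
  refine Finset.sum_le_sum fun j _ => ?_
  by_cases hj : j ∈ S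
  · exact mul_le_mul_of_nonneg_right (hS j hj) (by positivity)
  · simp [inner_rightSingularBasis_eq_zero M hx hj]

theorem exists_submodule_norm_le_sval (hk : 1 ≤ k) (hkn : k ≤ n) :
    ∃ V : Submodule ℂ (EuclideanSpace ℂ (Fin n)), Module.finrank ℂ V = n - k + 1 ∧
      ∀ x ∈ V, ‖toEuclideanLin M x‖ ≤ sval M k * ‖x‖ := by
  set i : Fin n := ⟨n - k, by omega⟩
  refine ⟨Submodule.span ℂ (rightSingularBasis M '' ↑(Finset.Iic i)), ?_, fun x hx => ?_⟩
  · rw [(rightSingularBasis M).orthonormal.linearIndependent.finrank_span_image, Fin.card_Iic]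
  · refine (sq_le_sq₀ (norm_nonneg _) (mul_nonneg (sval_nonneg M) (norm_nonneg x))).mp ?_
    rw [mul_pow, sq_sval M hk hkn]
    exact norm_toEuclideanLin_sq_le M
      (fun j hj => IsHermitian.monotone_sortedEigenvalues _ (Finset.mem_Iic.mp hj)) hx

theorem exists_submodule_sval_le_norm (hk : 1 ≤ k) (hkn : k ≤ n) :
    ∃ W : Submodule ℂ (EuclideanSpace ℂ (Fin n)), Module.finrank ℂ W = k ∧
      ∀ x ∈ W, sval M k * ‖x‖ ≤ ‖toEuclideanLin M x‖ := by
  set i : Fin n := ⟨n - k, by omega⟩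
  refine ⟨Submodule.span ℂ (rightSingularBasis M '' ↑(Finset.Ici i)), ?_, fun x hx => ?_⟩
  · rw [(rightSingularBasis M).orthonormal.linearIndependent.finrank_span_image, Fin.card_Ici]
    simp only [i]
    omega
  · refine (sq_le_sq₀ (mul_nonneg (sval_nonneg M) (norm_nonneg x)) (norm_nonneg _)).mp ?_
    rw [mul_pow, sq_sval M hk hkn]
    exact le_norm_toEuclideanLin_sq M
      (fun j hj => IsHermitian.monotone_sortedEigenvalues _ (Finset.mem_Ici.mp hj)) hx

end CourantFischer

theorem Submodule.finrank_add_finrank_le_finrank_inf_add {K V : Type*} [DivisionRing K]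
    [AddCommGroup V] [Module K V] [FiniteDimensional K V] (s t : Submodule K V) :
    Module.finrank K s + Module.finrank K t ≤
      Module.finrank K ↥(s ⊓ t) + Module.finrank K V := by
  rw [← s.finrank_sup_add_finrank_inf_eq t, add_comm]
  exact Nat.add_le_add_left (Submodule.finrank_le _) _

section Weyl

variable {n k : ℕ}

theorem sval_le_of_forall_norm_le (M : Matrix (Fin n) (Fin n) ℂ) (hk : 1 ≤ k) (hkn : k ≤ n)
    {V : Submodule ℂ (EuclideanSpace ℂ (Fin n))} (hV : n - k + 1 ≤ Module.finrank ℂ V)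
    {c : ℝ} (hc : ∀ x ∈ V, ‖toEuclideanLin M x‖ ≤ c * ‖x‖) : sval M k ≤ c := by
  obtain ⟨W, hW, hWM⟩ := exists_submodule_sval_le_norm M hk hkn
  have hVW : V ⊓ W ≠ ⊥ := by
    intro h
    have := V.finrank_add_finrank_le_finrank_inf_add W
    rw [h, finrank_bot, finrank_euclideanSpace_fin] at this
    omega
  obtain ⟨x, hx, hx0⟩ := Submodule.exists_mem_ne_zero_of_ne_bot hVW
  exact le_of_mul_le_mul_right ((hWM x hx.2).trans (hc x hx.1)) (norm_pos_iff.mpr hx0)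

theorem sval_le_sval_of_norm_le {M N : Matrix (Fin n) (Fin n) ℂ} (hk : 1 ≤ k) (hkn : k ≤ n)
    (h : ∀ x, ‖toEuclideanLin M x‖ ≤ ‖toEuclideanLin N x‖) : sval M k ≤ sval N k := by
  obtain ⟨V, hV, hVN⟩ := exists_submodule_norm_le_sval N hk hkn
  exact sval_le_of_forall_norm_le M hk hkn hV.ge fun x hx => (h x).trans (hVN x hx)

theorem sval_neg (M : Matrix (Fin n) (Fin n) ℂ) (hk : 1 ≤ k) (hkn : k ≤ n) :
    sval (-M) k = sval M k :=
  le_antisymm (sval_le_sval_of_norm_le hk hkn fun x => by simp)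
    (sval_le_sval_of_norm_le hk hkn fun x => by simp)

theorem sval_smul_one (hk : 1 ≤ k) (hkn : k ≤ n) (c : ℂ) :
    sval (c • (1 : Matrix (Fin n) (Fin n) ℂ)) k = ‖c‖ := by
  have hc (x : EuclideanSpace ℂ (Fin n)) :
      ‖toEuclideanLin (c • (1 : Matrix (Fin n) (Fin n) ℂ)) x‖ = ‖c‖ * ‖x‖ := by
    simp [norm_smul]
  refine le_antisymm (sval_le_of_forall_norm_le _ hk hkn (V := ⊤) ?_ fun x _ => (hc x).le) ?_
  · rw [finrank_top, finrank_euclideanSpace_fin]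
    omega
  · obtain ⟨V, hV, hVc⟩ := exists_submodule_norm_le_sval (c • (1 : Matrix _ _ ℂ)) hk hkn
    have hV0 : V ≠ ⊥ := by
      rintro rfl
      simp at hV
    obtain ⟨x, hx, hx0⟩ := Submodule.exists_mem_ne_zero_of_ne_bot hV0
    exact le_of_mul_le_mul_right ((hc x).symm.trans_le (hVc x hx)) (norm_pos_iff.mpr hx0)

theorem sval_add_le {i j : ℕ} (B C : Matrix (Fin n) (Fin n) ℂ) (hi : 1 ≤ i) (hj : 1 ≤ j)
    (hij : i + j ≤ n + 1) : sval (B + C) (i + j - 1) ≤ sval B i + sval C j := by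
  obtain ⟨V, hV, hVB⟩ := exists_submodule_norm_le_sval B hi (by omega)
  obtain ⟨W, hW, hWC⟩ := exists_submodule_norm_le_sval C hj (by omega)
  refine sval_le_of_forall_norm_le _ (by omega) (by omega) (V := V ⊓ W) ?_ fun x hx => ?_
  · have := V.finrank_add_finrank_le_finrank_inf_add W
    rw [finrank_euclideanSpace_fin] at this
    omega
  · calc ‖toEuclideanLin (B + C) x‖ = ‖toEuclideanLin B x + toEuclideanLin C x‖ := by
          rw [map_add, LinearMap.add_apply]
      _ ≤ ‖toEuclideanLin B x‖ + ‖toEuclideanLin C x‖ := norm_add_le _ _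
      _ ≤ sval B i * ‖x‖ + sval C j * ‖x‖ := add_le_add (hVB x hx.1) (hWC x hx.2)
      _ = (sval B i + sval C j) * ‖x‖ := (add_mul _ _ _).symm

end Weyl

section Shift

variable {n k : ℕ} (A : Matrix (Fin n) (Fin n) ℂ)

theorem sval_smul_one_sub_le (hk : 1 ≤ k) (hkn : k ≤ n) (z w : ℂ) :
    sval (z • (1 : Matrix (Fin n) (Fin n) ℂ) - A) k ≤
      sval (w • (1 : Matrix (Fin n) (Fin n) ℂ) - A) k + ‖z - w‖ := by
  have h := sval_add_le (w • (1 : Matrix (Fin n) (Fin n) ℂ) - A) ((z - w) • 1) hk le_rfl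
    (by omega)
  have hsum : (w • (1 : Matrix (Fin n) (Fin n) ℂ) - A) + (z - w) • 1 = z • 1 - A := by
    rw [sub_smul]
    abel
  rwa [hsum, Nat.add_sub_cancel, sval_smul_one le_rfl (by omega)] at h

theorem lipschitzWith_sval_smul_one_sub (hk : 1 ≤ k) (hkn : k ≤ n) :
    LipschitzWith 1 fun z : ℂ => sval (z • (1 : Matrix (Fin n) (Fin n) ℂ) - A) k :=
  LipschitzWith.of_le_add fun z w => by
    simpa only [Complex.dist_eq] using sval_smul_one_sub_le A hk hkn z w

theorem norm_le_sval_smul_one_sub_add (hk : 1 ≤ k) (hkn : k ≤ n) (z : ℂ) :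
    ‖z‖ ≤ sval (z • (1 : Matrix (Fin n) (Fin n) ℂ) - A) k + sval A 1 := by
  have h := sval_add_le (z • (1 : Matrix (Fin n) (Fin n) ℂ) - A) A hk le_rfl (by omega)
  rwa [sub_add_cancel, Nat.add_sub_cancel, sval_smul_one hk hkn] at h

theorem exists_forall_sval_smul_one_sub_le (hk : 1 ≤ k) (hkn : k ≤ n) :
    ∃ zk : ℂ, ∀ z : ℂ, sval (zk • (1 : Matrix (Fin n) (Fin n) ℂ) - A) k ≤
      sval (z • (1 : Matrix (Fin n) (Fin n) ℂ) - A) k := by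
  refine (lipschitzWith_sval_smul_one_sub A hk hkn).continuous.exists_forall_le ?_
  refine tendsto_atTop_mono (fun z => ?_)
    (tendsto_atTop_add_const_right _ (-sval A 1) tendsto_norm_cocompact_atTop)
  linarith [norm_le_sval_smul_one_sub_add A hk hkn z]

theorem norm_sub_le_sval_smul_one_sub_add (hk : 1 ≤ k) (hk2 : 2 * k ≤ n + 1) (z w : ℂ) :
    ‖z - w‖ ≤ sval (z • (1 : Matrix (Fin n) (Fin n) ℂ) - A) k +
      sval (w • (1 : Matrix (Fin n) (Fin n) ℂ) - A) k := by
  have h := sval_add_le (z • (1 : Matrix (Fin n) (Fin n) ℂ) - A) (-(w • 1 - A)) hk hk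
    (by omega)
  have hsum : (z • (1 : Matrix (Fin n) (Fin n) ℂ) - A) + -(w • 1 - A) = (z - w) • 1 := by
    rw [sub_smul]
    abel
  rwa [hsum, sval_neg _ hk (by omega), sval_smul_one (by omega) (by omega)] at h

end Shift

/-- lower bound on shifted singular values: a minimizer `z_k` of
`z ↦ σ_k(zI−A)` exists, and for any such minimizer and every `z`,
`σ_k(zI−A) ≥ max(s_k, |z−z_k|/2)`. -/
theorem stmt15 (n k : ℕ) (hk : 1 ≤ k) (hk2 : 2 * k ≤ n + 1)
    (A : Matrix (Fin n) (Fin n) ℂ) :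
    (∃ zk : ℂ, ∀ z : ℂ,
        sval (zk • (1 : Matrix (Fin n) (Fin n) ℂ) - A) k ≤
          sval (z • (1 : Matrix (Fin n) (Fin n) ℂ) - A) k) ∧
    (∀ zk : ℂ,
      (∀ z : ℂ, sval (zk • (1 : Matrix (Fin n) (Fin n) ℂ) - A) k ≤
          sval (z • (1 : Matrix (Fin n) (Fin n) ℂ) - A) k) →
      ∀ z : ℂ, sval (z • (1 : Matrix (Fin n) (Fin n) ℂ) - A) k ≥
        max (sval (zk • (1 : Matrix (Fin n) (Fin n) ℂ) - A) k)
          (‖z - zk‖ / 2)) := by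
  refine ⟨exists_forall_sval_smul_one_sub_le A hk (by omega), fun zk hmin z => ?_⟩
  have h := norm_sub_le_sval_smul_one_sub_add A hk hk2 z zk
  exact max_le (hmin z) (by linarith [hmin z])
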